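/- There exists a constant C, depending only on T and M := sup_j |b_j|, such that for every y = [y_j] ∈ W¹_{2,α} satisfying y₁(0) = 0 and the matching conditions y_{k_j}(1) = y_j(0) for all j ≥ 2, one has Σ_{j=1}^∞ α_j ∫₀¹ |y_j(t)|² dt ≤ C · Σ_{j=1}^∞ α_j ∫₀¹ |y_j'(t) + b_j y_j(t)|² dt. -/

import Mathlib

open MeasureTheory Set

noncomputable section

/-- Encoding of the infinite rooted temporal tree `𝒯` together with the probabilistic data
`θ_l`, `p_l`, the edge coefficients `b_j`, the edge probabilities `p̃_j` and the
weights `α_j`.  Edges are indexed by `j ∈ ℕ`, `j ≥ 1` (the index `0` is unused);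
`ℕ₁` is the set of odd indices (internal vertices) and `ℕ₂` the set of even
indices `≥ 2` (boundary vertices other than the root). -/
structure TreeSetup where
  /-- the time horizon -/
  T : ℕ
  hT : 2 ≤ T
  /-- `k j` is the index of the initial vertex of the edge `e_j` -/
  k : ℕ → ℕ
  /-- `nu j = ν_j`, so that the `ν_j`-th iterate of `k` maps `j` to `1` -/
  nu : ℕ → ℕ
  /-- `enum j l = ν_{j,l}`, the enumeration of `V_j = {ν : k ν = j}` for odd `j` -/
  enum : ℕ → ℕ → ℕ
  /-- the possible values of the random coefficient -/
  θ : ℕ → ℂ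
  /-- the probabilities `p_l` -/
  p : ℕ → ℝ
  /-- the edge coefficients `b_j` -/
  b : ℕ → ℂ
  /-- the edge probabilities `p̃_j` -/
  ptil : ℕ → ℝ
  /-- the weights `α_j` -/
  α : ℕ → ℝ
  hk1 : k 1 = 0
  hk_eq_zero : ∀ j, 1 ≤ j → k j = 0 → j = 1
  hk_odd : ∀ j, 2 ≤ j → Odd (k j)
  henum_ge : ∀ j l, Odd j → 2 ≤ enum j l
  henum_k : ∀ j l, Odd j → k (enum j l) = j
  henum_inj : ∀ j, Odd j → Function.Injective (enum j)
  henum_surj : ∀ j m, Odd j → 2 ≤ m → k m = j → ∃ l, enum j l = m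
  htree : ∀ j, 1 ≤ j → k^[nu j] j = 1
  hnu1 : nu 1 = 0
  hnu_rec : ∀ j, 2 ≤ j → nu j = nu (k j) + 1
  hdepth_boundary : ∀ j, 2 ≤ j → Even j → nu j + 1 = T
  hdepth_internal : ∀ j, Odd j → nu j + 1 < T
  hθ_bdd : ∃ M : ℝ, ∀ l, ‖θ l‖ ≤ M
  hp_pos : ∀ l, 0 < p l
  hp_sum : HasSum p 1
  hb_enum : ∀ j l, Odd j → b (enum j l) = θ l
  hptil_enum : ∀ j l, Odd j → ptil (enum j l) = p l
  hα0 : α 0 = 0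
  hα1 : α 1 = 1
  hα_rec : ∀ j, 2 ≤ j → α j = ptil j * α (k j)

/-- `f ∈ W₂¹[0,1]` with derivative `f'`: `f'` is integrable with square-integrable
norm on `[0,1]` and `f` is the indefinite integral of `f'` (so `f` is absolutely
continuous on `[0,1]`). -/
def IsW1 (f f' : ℝ → ℂ) : Prop :=
  IntegrableOn f' (Icc (0:ℝ) 1) ∧
  IntegrableOn (fun t => ‖f' t‖ ^ 2) (Icc (0:ℝ) 1) ∧
  ∀ t ∈ Icc (0:ℝ) 1, f t = f 0 + ∫ s in (0:ℝ)..t, f' s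

/-- `f ∈ W₂²[0,1]` with first derivative `f'` and second derivative `f''`. -/
def IsW2 (f f' f'' : ℝ → ℂ) : Prop := IsW1 f f' ∧ IsW1 f' f''

/-- The squared `L²(0,1)` norm. -/
def sqL2 (f : ℝ → ℂ) : ℝ := ∫ t in Icc (0:ℝ) 1, ‖f t‖ ^ 2

/-- Membership in `L_{2,α} = W⁰_{2,α}`. -/
def MemL2α (S : TreeSetup) (u : ℕ → ℝ → ℂ) : Prop :=
  (∀ j, 1 ≤ j → IntegrableOn (u j) (Icc (0:ℝ) 1) ∧
      IntegrableOn (fun t => ‖u j t‖ ^ 2) (Icc (0:ℝ) 1)) ∧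
  Summable (fun j => S.α j * sqL2 (u j))

/-- Membership in `W¹_{2,α}` (the tuple of derivatives is `y'`). -/
def MemW1α (S : TreeSetup) (y y' : ℕ → ℝ → ℂ) : Prop :=
  (∀ j, 1 ≤ j → IsW1 (y j) (y' j)) ∧
  Summable (fun j => S.α j * (sqL2 (y j) + sqL2 (y' j)))

/-- Membership in `W²_{2,α}`. -/
def MemW2α (S : TreeSetup) (y y' y'' : ℕ → ℝ → ℂ) : Prop :=
  (∀ j, 1 ≤ j → IsW2 (y j) (y' j) (y'' j)) ∧
  Summable (fun j => S.α j * (sqL2 (y j) + sqL2 (y' j) + sqL2 (y'' j)))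

/-- The second order differential expression `ℒy = -y'' - 2i(Im b)y' + |b|²y`. -/
def Lexpr (b : ℂ) (y y' y'' : ℝ → ℂ) : ℝ → ℂ :=
  fun t => -(y'' t) - 2 * Complex.I * (b.im : ℂ) * y' t + ((‖b‖ : ℝ) : ℂ) ^ 2 * y t

/-- The boundary value problem `ℬ` on the tree `𝒯`: equations `ℒ_j y = 0` on `(0,1)`,
initial condition (9), matching conditions (10), final conditions (11), and the
Kirchhoff-type conditions (14). -/
def SatisfiesBVP (S : TreeSetup) (φ0 φ1 : ℂ) (y y' y'' : ℕ → ℝ → ℂ) : Prop :=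
  MemW2α S y y' y'' ∧
  (∀ j, 1 ≤ j → ∀ᵐ t ∂(volume.restrict (Ioo (0:ℝ) 1)),
      Lexpr (S.b j) (y j) (y' j) (y'' j) t = 0) ∧
  y 1 0 = φ0 ∧
  (∀ j, 2 ≤ j → y (S.k j) 1 = y j 0) ∧
  (∀ j, 2 ≤ j → Even j → y j 1 = φ1) ∧
  (∀ j, Odd j →
    y' j 1 + (S.b j - ∑' l, (S.p l : ℂ) * S.b (S.enum j l)) * y j 1
      = ∑' l, (S.p l : ℂ) * y' (S.enum j l) 0)

/-- Admissible tuples for the variational problem `𝒱`: members of `W¹_{2,α}`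
satisfying (9), (10) and (11). -/
def Admissible (S : TreeSetup) (φ0 φ1 : ℂ) (y y' : ℕ → ℝ → ℂ) : Prop :=
  MemW1α S y y' ∧ y 1 0 = φ0 ∧
  (∀ j, 2 ≤ j → y (S.k j) 1 = y j 0) ∧
  (∀ j, 2 ≤ j → Even j → y j 1 = φ1)

/-- The energy functional `J(y) = Σ_j α_j ∫₀¹ |y_j' + b_j y_j|² dt`. -/
def energy (S : TreeSetup) (y y' : ℕ → ℝ → ℂ) : ℝ :=
  ∑' j, S.α j * sqL2 (fun t => y' j t + S.b j * y j t)

/-!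
On a single edge, writing `f' = g - b f` with `g = f' + b f` gives
`|f t| ≤ |f 0| + ‖g‖₁ + |b| ∫₀ᵗ |f|`, so Grönwall's inequality and `‖g‖₁ ≤ ‖g‖₂` yield
`|f t|² ≤ 2 e^{2|b|} (|f 0|² + ‖g‖₂²)` on `[0, 1]`. This bounds both `‖y_j‖²` and `|y_j(1)|²`
by `|y_j(0)|²` plus the energy of the edge. Since the weights of the children of an internal
vertex add up to the weight of the vertex, the matching conditions turn the weighted sum of
`|y_j(0)|²` over the edges of depth `d + 1` into the weighted sum of `|y_i(1)|²` over the internal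
edges of depth `d`. Starting from `y₁(0) = 0` and going down the `T` levels, the weighted sum of
`|y_j(0)|²` is at most `T (c + 1)^T` times the energy, where `c = 2 e^{2M}`.
-/

open Real Filter Topology
open scoped ENNReal

lemma le_mul_exp_of_le_add_mul_integral {u : ℝ → ℝ} {A K b : ℝ} (hu : ContinuousOn u (Icc 0 b))
    (hK : 0 ≤ K) (h : ∀ t ∈ Icc 0 b, u t ≤ A + K * ∫ s in (0:ℝ)..t, u s) :
    ∀ t ∈ Icc 0 b, u t ≤ A * exp (K * t) := by
  set V : ℝ → ℝ := fun t => A + K * ∫ s in (0:ℝ)..t, u s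
  have hV : ∀ x ∈ Ico 0 b, HasDerivWithinAt V (K * u x) (Ici x) x := by
    intro x hx
    have hint : IntervalIntegrable u volume 0 x :=
      (hu.mono (Icc_subset_Icc le_rfl hx.2.le)).intervalIntegrable_of_Icc hx.1
    have hnhds : Icc 0 b ∈ 𝓝[>] x := Icc_mem_nhdsGT_of_mem ⟨hx.1, hx.2⟩
    have := intervalIntegral.integral_hasDerivWithinAt_right hint
      (s := Ici x) (t := Ioi x)
      ((hu.stronglyMeasurableAtFilter_nhdsWithin measurableSet_Icc x).filter_mono
        (nhdsWithin_le_of_mem hnhds))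
      ((hu x (Ico_subset_Icc_self hx)).mono_of_mem_nhdsWithin hnhds)
    exact (this.const_mul K).const_add A
  have hVc : ContinuousOn V (Icc 0 b) := by
    rcases le_or_gt 0 b with hb | hb
    · have := intervalIntegral.continuousOn_primitive_interval (μ := volume)
        (by rw [uIcc_of_le hb]; exact hu.integrableOn_Icc)
      rw [uIcc_of_le hb] at this
      exact (this.const_smul K).const_add A
    · simp [Icc_eq_empty_of_lt hb]
  intro t ht
  have := le_gronwallBound_of_liminf_deriv_right_le (δ := A) (K := K) (ε := 0) hVc
    (fun x hx _r hr => (hV x hx).liminf_right_slope_le hr) (by simp [V])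
    (fun x hx => by simpa using mul_le_mul_of_nonneg_left (h x (Ico_subset_Icc_self hx)) hK) t ht
  rw [gronwallBound_ε0, sub_zero] at this
  exact (h t ht).trans this

lemma ENNReal.add_le_pow_mul_of_le_mul_add {Φ : ℕ → ℝ≥0∞} {c E : ℝ≥0∞} (h0 : Φ 0 = 0)
    (hsucc : ∀ d, Φ (d + 1) ≤ c * (Φ d + E)) (d : ℕ) : Φ d + E ≤ (c + 1) ^ d * E := by
  induction d with
  | zero => simp [h0]
  | succ d ih =>
    calc Φ (d + 1) + E ≤ c * (Φ d + E) + (Φ d + E) := by gcongr; exacts [hsucc d, le_add_self]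
      _ = (c + 1) * (Φ d + E) := by ring
      _ ≤ (c + 1) ^ (d + 1) * E := by rw [pow_succ', mul_assoc]; gcongr

lemma ENNReal.ofReal_le_ofReal_mul_add {r a b c : ℝ} (ha : 0 ≤ a) (hb : 0 ≤ b)
    (h : r ≤ c * (a + b)) :
    ENNReal.ofReal r ≤ ENNReal.ofReal c * (ENNReal.ofReal a + ENNReal.ofReal b) := by
  rw [← ENNReal.ofReal_add ha hb, ← ENNReal.ofReal_mul' (add_nonneg ha hb)]
  exact ENNReal.ofReal_le_ofReal h

lemma tsum_le_mul_tsum_of_ofReal_le {ι : Type*} {a b : ι → ℝ} {K : ℝ} (ha : 0 ≤ a) (hb : 0 ≤ b)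
    (hbs : Summable b) (hK : 0 ≤ K)
    (h : ∑' i, ENNReal.ofReal (a i) ≤ ENNReal.ofReal K * ∑' i, ENNReal.ofReal (b i)) :
    ∑' i, a i ≤ K * ∑' i, b i := by
  by_cases has : Summable a
  · rw [← ENNReal.ofReal_tsum_of_nonneg ha has, ← ENNReal.ofReal_tsum_of_nonneg hb hbs,
      ← ENNReal.ofReal_mul hK] at h
    exact (ENNReal.ofReal_le_ofReal_iff (mul_nonneg hK (tsum_nonneg hb))).1 h
  · rw [tsum_eq_zero_of_not_summable has]
    exact mul_nonneg hK (tsum_nonneg hb)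

section W1

variable {f f' : ℝ → ℂ}

lemma sqL2_nonneg (f : ℝ → ℂ) : 0 ≤ sqL2 f :=
  integral_nonneg fun _ => sq_nonneg _

lemma norm_add_mul_sq_le (x y b : ℂ) : ‖x + b * y‖ ^ 2 ≤ 2 * ‖x‖ ^ 2 + 2 * ‖b‖ ^ 2 * ‖y‖ ^ 2 := by
  have h := (norm_add_le x (b * y)).trans_eq (congrArg _ (norm_mul b y))
  nlinarith [norm_nonneg (x + b * y), sq_nonneg (‖x‖ - ‖b‖ * ‖y‖)]

lemma sq_integral_norm_le_sqL2 {g : ℝ → ℂ} (hg : IntegrableOn g (Icc 0 1))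
    (hg2 : IntegrableOn (fun t => ‖g t‖ ^ 2) (Icc 0 1)) :
    (∫ t in Icc (0:ℝ) 1, ‖g t‖) ^ 2 ≤ sqL2 g := by
  have : IsProbabilityMeasure (volume.restrict (Icc (0:ℝ) 1)) := ⟨by simp⟩
  exact (Even.convexOn_pow even_two).map_integral_le (continuous_pow 2).continuousOn
    isClosed_univ (by simp) hg.norm hg2

namespace IsW1

lemma continuousOn (h : IsW1 f f') : ContinuousOn f (Icc 0 1) := by
  have hprim := intervalIntegral.continuousOn_primitive_interval (μ := volume) (a := 0) (b := 1)
    (by rw [uIcc_of_le zero_le_one]; exact h.1)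
  rw [uIcc_of_le zero_le_one] at hprim
  exact (continuousOn_const.add hprim).congr h.2.2

lemma integrableOn (h : IsW1 f f') : IntegrableOn f (Icc 0 1) :=
  h.continuousOn.integrableOn_Icc

lemma integrableOn_sq_norm (h : IsW1 f f') : IntegrableOn (fun t => ‖f t‖ ^ 2) (Icc 0 1) :=
  (h.continuousOn.norm.pow 2).integrableOn_Icc

lemma integrableOn_add_mul (h : IsW1 f f') (b : ℂ) :
    IntegrableOn (fun t => f' t + b * f t) (Icc 0 1) :=
  h.1.add (h.integrableOn.const_mul b)

lemma integrableOn_sq_norm_add_mul (h : IsW1 f f') (b : ℂ) :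
    IntegrableOn (fun t => ‖f' t + b * f t‖ ^ 2) (Icc 0 1) := by
  refine Integrable.mono' ((h.2.1.const_mul 2).add (h.integrableOn_sq_norm.const_mul (2 * ‖b‖ ^ 2)))
    ((h.integrableOn_add_mul b).aestronglyMeasurable.norm.pow 2) (Eventually.of_forall fun t => ?_)
  simpa using norm_add_mul_sq_le (f' t) (f t) b

lemma sqL2_add_mul_le (h : IsW1 f f') (b : ℂ) :
    sqL2 (fun t => f' t + b * f t) ≤ 2 * sqL2 f' + 2 * ‖b‖ ^ 2 * sqL2 f := by
  have hi' := h.2.1.const_mul 2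
  have hi := h.integrableOn_sq_norm.const_mul (2 * ‖b‖ ^ 2)
  calc sqL2 (fun t => f' t + b * f t)
      ≤ ∫ t in Icc (0:ℝ) 1, (2 * ‖f' t‖ ^ 2 + 2 * ‖b‖ ^ 2 * ‖f t‖ ^ 2) :=
        setIntegral_mono_on (h.integrableOn_sq_norm_add_mul b) (by exact hi'.add hi)
          measurableSet_Icc fun t _ => norm_add_mul_sq_le (f' t) (f t) b
    _ = 2 * sqL2 f' + 2 * ‖b‖ ^ 2 * sqL2 f := by
        rw [integral_add hi' hi, integral_const_mul, integral_const_mul, sqL2, sqL2]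

lemma norm_le_add_integral (h : IsW1 f f') (b : ℂ) {t : ℝ} (ht : t ∈ Icc 0 1) :
    ‖f t‖ ≤ (‖f 0‖ + ∫ s in Icc (0:ℝ) 1, ‖f' s + b * f s‖) + ‖b‖ * ∫ s in (0:ℝ)..t, ‖f s‖ := by
  have hsub : Ioc 0 t ⊆ Icc (0:ℝ) 1 := Ioc_subset_Icc_self.trans (Icc_subset_Icc le_rfl ht.2)
  have hg : IntervalIntegrable (fun s => f' s + b * f s) volume 0 t :=
    (intervalIntegrable_iff_integrableOn_Ioc_of_le ht.1).2
      ((h.integrableOn_add_mul b).mono_set hsub)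
  have hf : IntervalIntegrable f volume 0 t :=
    (intervalIntegrable_iff_integrableOn_Ioc_of_le ht.1).2 (h.integrableOn.mono_set hsub)
  have hrepr : f t = f 0 + ((∫ s in (0:ℝ)..t, (f' s + b * f s)) - b * ∫ s in (0:ℝ)..t, f s) := by
    rw [h.2.2 t ht, ← intervalIntegral.integral_const_mul,
      ← intervalIntegral.integral_sub hg (hf.const_mul b)]
    simp
  have hgt : ‖∫ s in (0:ℝ)..t, (f' s + b * f s)‖ ≤ ∫ s in Icc (0:ℝ) 1, ‖f' s + b * f s‖ := by
    refine (intervalIntegral.norm_integral_le_integral_norm ht.1).trans ?_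
    rw [intervalIntegral.integral_of_le ht.1]
    exact setIntegral_mono_set (h.integrableOn_add_mul b).norm
      (Eventually.of_forall fun _ => norm_nonneg _) hsub.eventuallyLE
  have hft : ‖∫ s in (0:ℝ)..t, f s‖ ≤ ∫ s in (0:ℝ)..t, ‖f s‖ :=
    intervalIntegral.norm_integral_le_integral_norm ht.1
  rw [hrepr]
  calc _ ≤ ‖f 0‖ + (‖∫ s in (0:ℝ)..t, (f' s + b * f s)‖ + ‖b‖ * ‖∫ s in (0:ℝ)..t, f s‖) := by
        grw [norm_add_le, norm_sub_le, norm_mul]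
    _ ≤ _ := by grw [hgt, hft]; linarith

lemma norm_le_exp_mul (h : IsW1 f f') (b : ℂ) {t : ℝ} (ht : t ∈ Icc 0 1) :
    ‖f t‖ ≤ exp ‖b‖ * (‖f 0‖ + ∫ s in Icc (0:ℝ) 1, ‖f' s + b * f s‖) := by
  have hgronwall := le_mul_exp_of_le_add_mul_integral h.continuousOn.norm (norm_nonneg b)
    (fun t ht => h.norm_le_add_integral b ht) t ht
  refine hgronwall.trans ?_
  rw [mul_comm]
  gcongr
  nlinarith [ht.2, norm_nonneg b]

lemma sq_norm_le (h : IsW1 f f') {b : ℂ} {M : ℝ} (hb : ‖b‖ ≤ M) {t : ℝ} (ht : t ∈ Icc 0 1) :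
    ‖f t‖ ^ 2 ≤ 2 * exp (2 * M) * (‖f 0‖ ^ 2 + sqL2 (fun s => f' s + b * f s)) := by
  set G := ∫ s in Icc (0:ℝ) 1, ‖f' s + b * f s‖
  have hG0 : 0 ≤ G := integral_nonneg fun _ => norm_nonneg _
  have hG : G ^ 2 ≤ sqL2 (fun s => f' s + b * f s) :=
    sq_integral_norm_le_sqL2 (h.integrableOn_add_mul b) (h.integrableOn_sq_norm_add_mul b)
  have hexp : exp (2 * M) = exp M ^ 2 := by rw [← exp_nat_mul]; norm_num
  calc ‖f t‖ ^ 2 ≤ (exp M * (‖f 0‖ + G)) ^ 2 := by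
        gcongr
        exact (h.norm_le_exp_mul b ht).trans (by gcongr)
    _ ≤ exp M ^ 2 * (2 * (‖f 0‖ ^ 2 + G ^ 2)) := by
        rw [mul_pow]; gcongr; nlinarith [sq_nonneg (‖f 0‖ - G)]
    _ ≤ _ := by rw [hexp]; nlinarith [exp_pos M]

lemma sqL2_le (h : IsW1 f f') {b : ℂ} {M : ℝ} (hb : ‖b‖ ≤ M) :
    sqL2 f ≤ 2 * exp (2 * M) * (‖f 0‖ ^ 2 + sqL2 (fun s => f' s + b * f s)) := by
  calc sqL2 f
      ≤ ∫ _ in Icc (0:ℝ) 1, 2 * exp (2 * M) * (‖f 0‖ ^ 2 + sqL2 (fun s => f' s + b * f s)) :=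
        setIntegral_mono_on h.integrableOn_sq_norm (integrableOn_const (by simp)) measurableSet_Icc
          fun t ht => h.sq_norm_le hb ht
    _ = _ := by simp

end IsW1

end W1

namespace TreeSetup

variable (S : TreeSetup)

lemma ptil_nonneg {j : ℕ} (hj : 2 ≤ j) : 0 ≤ S.ptil j := by
  obtain ⟨l, hl⟩ := S.henum_surj (S.k j) j (S.hk_odd j hj) hj rfl
  rw [← hl, S.hptil_enum _ l (S.hk_odd j hj)]
  exact (S.hp_pos l).le

lemma alpha_nonneg (j : ℕ) : 0 ≤ S.α j := by
  suffices ∀ n j, 1 ≤ j → S.nu j = n → 0 ≤ S.α j by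
    rcases j.eq_zero_or_pos with rfl | hj
    · exact S.hα0.ge
    · exact this _ j hj rfl
  intro n
  induction n with
  | zero =>
    intro j hj hnu
    obtain rfl : j = 1 := by
      by_contra hne
      have := S.hnu_rec j (by omega)
      omega
    exact S.hα1.ge.trans' zero_le_one
  | succ n ih =>
    intro j hj hnu
    rcases hj.eq_or_lt with rfl | hj
    · exact S.hα1.ge.trans' zero_le_one
    rw [S.hα_rec j hj]
    exact mul_nonneg (S.ptil_nonneg hj)
      (ih _ (S.hk_odd j hj).pos (by have := S.hnu_rec j hj; omega))

lemma alpha_enum {i : ℕ} (hi : Odd i) (l : ℕ) : S.α (S.enum i l) = S.p l * S.α i := by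
  rw [S.hα_rec _ (S.henum_ge i l hi), S.hptil_enum i l hi, S.henum_k i l hi]

lemma nu_lt_T {j : ℕ} (hj : 1 ≤ j) : S.nu j < S.T := by
  rcases j.even_or_odd with he | ho
  · have := S.hdepth_boundary j (by rcases he with ⟨m, hm⟩; omega) he
    omega
  · have := S.hdepth_internal j ho
    omega

/-- The edges `j ≥ 2` are exactly the `enum i l` with `i` odd, and the weights of the children
of `i` add up to `α i` because `∑ p_l = 1`. -/
lemma tsum_weight_mul_parent (F : ℕ → ℝ≥0∞) :
    (∑' j, if 2 ≤ j then ENNReal.ofReal (S.α j) * F (S.k j) else 0)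
      = ∑' i, if Odd i then ENNReal.ofReal (S.α i) * F i else 0 := by
  let e : (Σ _ : {i : ℕ | Odd i}, ℕ) ≃ {j : ℕ | 2 ≤ j} :=
    Equiv.ofBijective (fun x => ⟨S.enum x.1 x.2, S.henum_ge _ _ x.1.2⟩)
      ⟨by
        rintro ⟨⟨i, hi⟩, l⟩ ⟨⟨i', hi'⟩, l'⟩ hx
        have hx : S.enum i l = S.enum i' l' := congrArg Subtype.val hx
        obtain rfl : i = i' := by rw [← S.henum_k i l hi, ← S.henum_k i' l' hi', hx]
        obtain rfl : l = l' := S.henum_inj i hi hx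
        rfl,
      by
        rintro ⟨j, hj⟩
        obtain ⟨l, hl⟩ := S.henum_surj (S.k j) j (S.hk_odd j hj) hj rfl
        exact ⟨⟨⟨S.k j, S.hk_odd j hj⟩, l⟩, Subtype.ext hl⟩⟩
  have hp : ∑' l, ENNReal.ofReal (S.p l) = 1 := by
    rw [← ENNReal.ofReal_tsum_of_nonneg (fun l => (S.hp_pos l).le) S.hp_sum.summable,
      S.hp_sum.tsum_eq, ENNReal.ofReal_one]
  have hchildren (i : {i : ℕ | Odd i}) :
      ∑' l, ENNReal.ofReal (S.α (S.enum i l)) * F (S.k (S.enum i l))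
        = ENNReal.ofReal (S.α i) * F i := by
    simp_rw [S.henum_k i _ i.2, S.alpha_enum i.2, ENNReal.ofReal_mul (S.hp_pos _).le, mul_assoc,
      ENNReal.tsum_mul_right, hp, one_mul]
  have hL := tsum_subtype {j : ℕ | 2 ≤ j} fun j => ENNReal.ofReal (S.α j) * F (S.k j)
  have hR := tsum_subtype {i : ℕ | Odd i} fun i => ENNReal.ofReal (S.α i) * F i
  simp only [Set.indicator_apply, Set.mem_ofPred_eq] at hL hR
  rw [← hL, ← hR, ← e.tsum_eq, ENNReal.tsum_sigma']
  exact tsum_congr hchildren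

/-- The `α`-weighted sum of `u` over the edges of depth `d + 1`. -/
def levelSum (u : ℕ → ℝ≥0∞) (d : ℕ) : ℝ≥0∞ :=
  ∑' j, if S.nu j = d then ENNReal.ofReal (S.α j) * u j else 0

variable {S}

lemma levelSum_zero (u : ℕ → ℝ≥0∞) : S.levelSum u 0 = u 1 := by
  rw [levelSum, tsum_eq_single 1]
  · simp [S.hnu1, S.hα1]
  intro j hj
  rcases j.eq_zero_or_pos with rfl | hj0
  · simp [S.hα0]
  · have := S.hnu_rec j (by omega)
    simp [this]

lemma levelSum_succ_le {u v : ℕ → ℝ≥0∞} (huv : ∀ j, 2 ≤ j → u j = v (S.k j)) (d : ℕ) :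
    S.levelSum u (d + 1) ≤ S.levelSum v d := by
  have hchild : ∀ j, (if S.nu j = d + 1 then ENNReal.ofReal (S.α j) * u j else 0)
      = if 2 ≤ j then ENNReal.ofReal (S.α j) * (if S.nu (S.k j) = d then v (S.k j) else 0)
        else 0 := by
    intro j
    rcases Nat.lt_or_ge j 2 with hj | hj
    · interval_cases j
      · simp [S.hα0]
      · simp [S.hnu1]
    · simp only [if_pos hj, S.hnu_rec j hj, add_left_inj, huv j hj]
      split_ifs <;> simp
  rw [levelSum, tsum_congr hchild, S.tsum_weight_mul_parent fun i => if S.nu i = d then v i else 0]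
  refine ENNReal.tsum_le_tsum fun i => ?_
  split_ifs <;> simp

lemma weight_mul_le {u v w : ℕ → ℝ≥0∞} {c : ℝ≥0∞} (h : ∀ j, 1 ≤ j → v j ≤ c * (u j + w j))
    (j : ℕ) : ENNReal.ofReal (S.α j) * v j
      ≤ c * (ENNReal.ofReal (S.α j) * u j + ENNReal.ofReal (S.α j) * w j) := by
  rcases j.eq_zero_or_pos with rfl | hj
  · simp [S.hα0]
  · calc _ ≤ ENNReal.ofReal (S.α j) * (c * (u j + w j)) := by gcongr; exact h j hj
      _ = _ := by ring

lemma tsum_weight_le {u v w : ℕ → ℝ≥0∞} {c : ℝ≥0∞} (h : ∀ j, 1 ≤ j → v j ≤ c * (u j + w j)) :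
    ∑' j, ENNReal.ofReal (S.α j) * v j
      ≤ c * (∑' j, ENNReal.ofReal (S.α j) * u j + ∑' j, ENNReal.ofReal (S.α j) * w j) := by
  rw [← ENNReal.tsum_add, ← ENNReal.tsum_mul_left]
  exact ENNReal.tsum_le_tsum (weight_mul_le h)

lemma levelSum_le {u v w : ℕ → ℝ≥0∞} {c : ℝ≥0∞} (h : ∀ j, 1 ≤ j → v j ≤ c * (u j + w j))
    (d : ℕ) : S.levelSum v d ≤ c * (S.levelSum u d + ∑' j, ENNReal.ofReal (S.α j) * w j) := by
  rw [levelSum, levelSum, ← ENNReal.tsum_add, ← ENNReal.tsum_mul_left]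
  refine ENNReal.tsum_le_tsum fun j => ?_
  split_ifs
  · exact weight_mul_le h j
  · exact zero_le

lemma tsum_weight_eq_sum_levelSum (u : ℕ → ℝ≥0∞) :
    ∑' j, ENNReal.ofReal (S.α j) * u j = ∑ d ∈ Finset.range S.T, S.levelSum u d := by
  simp only [levelSum]
  rw [← Summable.tsum_finsetSum fun _ _ => ENNReal.summable]
  refine tsum_congr fun j => ?_
  rcases j.eq_zero_or_pos with rfl | hj
  · simp [S.hα0]
  · rw [Finset.sum_ite_eq, if_pos (Finset.mem_range.2 (S.nu_lt_T hj))]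

lemma tsum_weight_le_of_edge_le {Y u₀ u₁ e : ℕ → ℝ≥0∞} {c : ℝ≥0∞} (hroot : u₀ 1 = 0)
    (hmatch : ∀ j, 2 ≤ j → u₀ j = u₁ (S.k j)) (hY : ∀ j, 1 ≤ j → Y j ≤ c * (u₀ j + e j))
    (hend : ∀ j, 1 ≤ j → u₁ j ≤ c * (u₀ j + e j)) :
    ∑' j, ENNReal.ofReal (S.α j) * Y j
      ≤ c * (S.T * (c + 1) ^ S.T + 1) * ∑' j, ENNReal.ofReal (S.α j) * e j := by
  set E := ∑' j, ENNReal.ofReal (S.α j) * e j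
  have hlevel : ∀ d, S.levelSum u₀ d + E ≤ (c + 1) ^ d * E :=
    ENNReal.add_le_pow_mul_of_le_mul_add (by rw [levelSum_zero, hroot])
      fun d => (levelSum_succ_le hmatch d).trans (levelSum_le hend d)
  have hstart : ∑' j, ENNReal.ofReal (S.α j) * u₀ j ≤ S.T * (c + 1) ^ S.T * E := by
    rw [tsum_weight_eq_sum_levelSum, mul_assoc]
    calc ∑ d ∈ Finset.range S.T, S.levelSum u₀ d ≤ ∑ _d ∈ Finset.range S.T, (c + 1) ^ S.T * E :=
          Finset.sum_le_sum fun d hd => (le_self_add.trans (hlevel d)).trans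
            (mul_le_mul_left (pow_le_pow_right₀ le_add_self (Finset.mem_range.1 hd).le) E)
      _ = S.T * ((c + 1) ^ S.T * E) := by simp
  calc _ ≤ c * (∑' j, ENNReal.ofReal (S.α j) * u₀ j + E) := tsum_weight_le hY
    _ ≤ c * (S.T * (c + 1) ^ S.T * E + E) := by gcongr
    _ = _ := by ring

lemma tsum_alpha_mul_le_of_edge_le {Y a₀ a₁ e : ℕ → ℝ} {c : ℝ} (hY₀ : 0 ≤ Y) (ha₀ : 0 ≤ a₀)
    (he₀ : 0 ≤ e) (hc : 0 ≤ c) (he : Summable fun j => S.α j * e j) (hroot : a₀ 1 = 0)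
    (hmatch : ∀ j, 2 ≤ j → a₀ j = a₁ (S.k j)) (hY : ∀ j, 1 ≤ j → Y j ≤ c * (a₀ j + e j))
    (hend : ∀ j, 1 ≤ j → a₁ j ≤ c * (a₀ j + e j)) :
    ∑' j, S.α j * Y j ≤ c * (S.T * (c + 1) ^ S.T + 1) * ∑' j, S.α j * e j := by
  refine tsum_le_mul_tsum_of_ofReal_le (fun j => mul_nonneg (S.alpha_nonneg j) (hY₀ j))
    (fun j => mul_nonneg (S.alpha_nonneg j) (he₀ j)) he (by positivity) ?_
  have hC : ENNReal.ofReal (c * (S.T * (c + 1) ^ S.T + 1))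
      = ENNReal.ofReal c * (S.T * (ENNReal.ofReal c + 1) ^ S.T + 1) := by
    rw [ENNReal.ofReal_mul hc, ENNReal.ofReal_add (by positivity) zero_le_one,
      ENNReal.ofReal_mul (Nat.cast_nonneg _), ENNReal.ofReal_pow (by positivity),
      ENNReal.ofReal_add hc zero_le_one, ENNReal.ofReal_one, ENNReal.ofReal_natCast]
  simp only [ENNReal.ofReal_mul (S.alpha_nonneg _), hC]
  exact tsum_weight_le_of_edge_le (u₁ := fun j => ENNReal.ofReal (a₁ j)) (by simp [hroot])
    (fun j hj => by rw [hmatch j hj])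
    (fun j hj => ENNReal.ofReal_le_ofReal_mul_add (ha₀ j) (he₀ j) (hY j hj))
    (fun j hj => ENNReal.ofReal_le_ofReal_mul_add (ha₀ j) (he₀ j) (hend j hj))

end TreeSetup

lemma MemW1α.summable_energy {S : TreeSetup} {y y' : ℕ → ℝ → ℂ} {M : ℝ} (hy : MemW1α S y y')
    (hb : ∀ j, 1 ≤ j → ‖S.b j‖ ≤ M) :
    Summable fun j => S.α j * sqL2 (fun t => y' j t + S.b j * y j t) := by
  refine Summable.of_nonneg_of_le (fun j => mul_nonneg (S.alpha_nonneg j) (sqL2_nonneg _))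
    (fun j => ?_) (hy.2.mul_left (2 + 2 * M ^ 2))
  rcases j.eq_zero_or_pos with rfl | hj
  · simp [S.hα0]
  have hg := (hy.1 j hj).sqL2_add_mul_le (S.b j)
  have hbM : ‖S.b j‖ ^ 2 ≤ M ^ 2 := pow_le_pow_left₀ (norm_nonneg _) (hb j hj) 2
  calc S.α j * sqL2 (fun t => y' j t + S.b j * y j t)
      ≤ S.α j * ((2 + 2 * M ^ 2) * (sqL2 (y j) + sqL2 (y' j))) := by
        gcongr
        · exact S.alpha_nonneg j
        nlinarith [mul_le_mul_of_nonneg_left hbM (sqL2_nonneg (y j)), sqL2_nonneg (y j),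
          sqL2_nonneg (y' j)]
    _ = _ := by ring

/-- A Poincaré-type estimate on the tree: there is a constant `C`
depending only on `T` and `M = sup_j |b_j|` such that for every `y ∈ W¹_{2,α}` with
`y₁(0) = 0` and the matching conditions (10),
`Σ_j α_j ∫₀¹ |y_j|² ≤ C Σ_j α_j ∫₀¹ |y_j' + b_j y_j|²`. -/
theorem tree_poincare_estimate (T : ℕ) (M : ℝ) :
    ∃ C : ℝ, ∀ S : TreeSetup, S.T = T →
      (∀ j, 1 ≤ j → ‖S.b j‖ ≤ M) →
      ∀ y y' : ℕ → ℝ → ℂ, MemW1α S y y' → y 1 0 = 0 →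
        (∀ j, 2 ≤ j → y (S.k j) 1 = y j 0) →
        ∑' j, S.α j * sqL2 (y j) ≤
          C * ∑' j, S.α j * sqL2 (fun t => y' j t + S.b j * y j t) := by
  refine ⟨2 * exp (2 * M) * (T * (2 * exp (2 * M) + 1) ^ T + 1),
    fun S hST hb y y' hy hroot hmatch => ?_⟩
  subst hST
  exact S.tsum_alpha_mul_le_of_edge_le (a₀ := fun j => ‖y j 0‖ ^ 2)
    (a₁ := fun j => ‖y j 1‖ ^ 2) (fun j => sqL2_nonneg _) (fun j => sq_nonneg _)
    (fun j => sqL2_nonneg _) (by positivity) (hy.summable_energy hb) (by simp [hroot])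
    (fun j hj => by simp only [hmatch j hj])
    (fun j hj => (hy.1 j hj).sqL2_le (hb j hj))
    (fun j hj => (hy.1 j hj).sq_norm_le (hb j hj) ⟨zero_le_one, le_rfl⟩)
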